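/- arXiv:1112.1753 — 9 statements merged into one kernel-verified Lean document; each statement's English description precedes it below -/
import Mathlib

section
/- For every λ ∈ (0,1), the series h_λ(θ) = Σ_{n=0}^∞ (−1)ⁿ ∏_{i=0}^{n−1} tan(g_λⁱ(θ)) converges absolutely and uniformly on compact subsets of [0, π/2) on which all iterates g_λⁱ(θ) stay in a compact subset of [0, π/2). -/
/-!
`g_λ θ = λ (π/2 - θ)` is affine with slope `-λ` and fixed point `θ_λ = λπ / (2(1 + λ)) < π/4`,
so `|g_λⁿ θ - θ_λ| ≤ λⁿ π/2` on `[0, π/2]`. Fixing `q ∈ (θ_λ, π/4)`, there is an `N`, independent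
of `θ`, after which every factor `tan (g_λⁱ θ)` is at most `tan q < 1`. A compact `K ⊆ [0, π/2)`
lies in some `[0, a]` with `λπ/2 ≤ a < π/2`, which `g_λ` maps into itself, so the first `N`
factors are at most `tan a`. The `n`-th term is thus `O((tan q)ⁿ)` uniformly on `K`, and the
Weierstrass M-test applies.
-/

open Real Filter Set

theorem Function.iterate_sub_eq_pow_mul {R : Type*} [Ring R] {f : R → R} {a p : R}
    (hf : ∀ x, f x - p = a * (x - p)) (n : ℕ) (x : R) : f^[n] x - p = a ^ n * (x - p) := by
  induction n with
  | zero => simp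
  | succ n ih => rw [Function.iterate_succ_apply', hf, ih, ← mul_assoc, ← pow_succ']

theorem IsCompact.exists_le_lt_subset_Iic {α : Type*} [LinearOrder α] [TopologicalSpace α]
    [ClosedIciTopology α] {K : Set α} {b c : α} (hK : IsCompact K) (hKb : K ⊆ Iio b)
    (hcb : c < b) : ∃ a, c ≤ a ∧ a < b ∧ K ⊆ Iic a := by
  rcases K.eq_empty_or_nonempty with rfl | hne
  · exact ⟨c, le_rfl, hcb, empty_subset _⟩
  obtain ⟨m, hmK, hm⟩ := hK.exists_isGreatest hne
  exact ⟨max c m, le_max_left _ _, max_lt hcb (hKb hmK),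
    fun x hx => (hm hx).trans (le_max_right _ _)⟩

theorem prod_range_le_mul_pow {t : ℕ → ℝ} {M r : ℝ} {N : ℕ} (ht : ∀ i, 0 ≤ t i)
    (htM : ∀ i < N, t i ≤ M) (htr : ∀ i, N ≤ i → t i ≤ r) (hr : 0 < r) (hrM : r ≤ M) (n : ℕ) :
    ∏ i ∈ Finset.range n, t i ≤ (M / r) ^ N * r ^ n := by
  rcases le_or_gt n N with hn | hn
  · calc ∏ i ∈ Finset.range n, t i ≤ ∏ _i ∈ Finset.range n, M :=
          Finset.prod_le_prod (fun i _ => ht i)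
            fun i hi => htM i ((Finset.mem_range.1 hi).trans_le hn)
      _ = (M / r) ^ n * r ^ n := by
          rw [Finset.prod_const, Finset.card_range, ← mul_pow, div_mul_cancel₀ _ hr.ne']
      _ ≤ (M / r) ^ N * r ^ n := by
          gcongr
          exact (one_le_div hr).2 hrM
  · obtain ⟨k, rfl⟩ := Nat.exists_eq_add_of_le hn.le
    rw [Finset.prod_range_add]
    calc (∏ i ∈ Finset.range N, t i) * ∏ i ∈ Finset.range k, t (N + i)
        ≤ (∏ _i ∈ Finset.range N, M) * ∏ _i ∈ Finset.range k, r :=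
          mul_le_mul
            (Finset.prod_le_prod (fun i _ => ht i) fun i hi => htM i (Finset.mem_range.1 hi))
            (Finset.prod_le_prod (fun i _ => ht _) fun i _ => htr _ (Nat.le_add_right _ _))
            (Finset.prod_nonneg fun i _ => ht _) (Finset.prod_nonneg fun _ _ => hr.le.trans hrM)
      _ = (M / r) ^ N * r ^ (N + k) := by
          simp only [Finset.prod_const, Finset.card_range]
          rw [div_pow, pow_add]
          field_simp

theorem Real.tan_le_tan_of_nonneg_of_lt_pi_div_two {x y : ℝ} (hx : 0 ≤ x) (hy : y < π / 2)
    (hxy : x ≤ y) : tan x ≤ tan y :=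
  strictMonoOn_tan.monotoneOn ⟨by linarith [pi_pos], by linarith⟩
    ⟨by linarith [pi_pos], hy⟩ hxy

/-- The map `g_λ`. -/
noncomputable def angleMap (l θ : ℝ) : ℝ := l * (π / 2 - θ)

theorem angleMap_mapsTo {l a : ℝ} (hl : 0 ≤ l) (hla : l * (π / 2) ≤ a) (ha : a ≤ π / 2) :
    MapsTo (angleMap l) (Icc 0 a) (Icc 0 a) := fun θ hθ =>
  ⟨mul_nonneg hl (by linarith [hθ.2]), by unfold angleMap; nlinarith [hθ.1]⟩

theorem angleMap_sub_fixedPoint {l : ℝ} (hl : 1 + l ≠ 0) (θ : ℝ) :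
    angleMap l θ - l * π / (2 * (1 + l)) = -l * (θ - l * π / (2 * (1 + l))) := by
  unfold angleMap
  field_simp
  ring

theorem angleMap_fixedPoint_lt_pi_div_four {l : ℝ} (hl0 : 0 ≤ l) (hl1 : l < 1) :
    l * π / (2 * (1 + l)) < π / 4 := by
  rw [div_lt_div_iff₀ (by positivity) (by norm_num)]
  nlinarith [pi_pos]

theorem eventually_angleMap_iterate_le {l q : ℝ} (hl0 : 0 ≤ l) (hl1 : l < 1)
    (hq : l * π / (2 * (1 + l)) < q) :
    ∀ᶠ n in atTop, ∀ θ ∈ Icc 0 (π / 2), (angleMap l)^[n] θ ≤ q := by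
  set p := l * π / (2 * (1 + l))
  have hp : p ∈ Icc 0 (π / 2) :=
    ⟨by positivity, by linarith [angleMap_fixedPoint_lt_pi_div_four hl0 hl1, pi_pos]⟩
  have hsmall : ∀ᶠ n in atTop, l ^ n * (π / 2) < q - p := by
    have := (tendsto_pow_atTop_nhds_zero_of_lt_one hl0 hl1).mul_const (π / 2)
    rw [zero_mul] at this
    exact this.eventually (gt_mem_nhds (by linarith))
  filter_upwards [hsmall] with n hn θ hθ
  have hdist : |θ - p| ≤ π / 2 :=
    abs_sub_le_iff.2 ⟨by linarith [hθ.2, hp.1], by linarith [hθ.1, hp.2]⟩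
  have hiter := Function.iterate_sub_eq_pow_mul (angleMap_sub_fixedPoint (by positivity)) n θ
  calc (angleMap l)^[n] θ = p + (-l) ^ n * (θ - p) := by linarith
    _ ≤ p + l ^ n * (π / 2) := by
        have : (-l) ^ n * (θ - p) ≤ l ^ n * (π / 2) :=
          calc (-l) ^ n * (θ - p) ≤ |(-l) ^ n * (θ - p)| := le_abs_self _
            _ = l ^ n * |θ - p| := by rw [abs_mul, abs_pow, abs_neg, abs_of_nonneg hl0]
            _ ≤ l ^ n * (π / 2) := by gcongr
        linarith
    _ ≤ q := by linarith

theorem exists_abs_prod_tan_angleMap_iterate_le {l a : ℝ} (hl0 : 0 ≤ l) (hl1 : l < 1)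
    (hla : l * (π / 2) ≤ a) (ha : a < π / 2) :
    ∃ C r : ℝ, 0 ≤ r ∧ r < 1 ∧ ∀ θ ∈ Icc 0 a, ∀ n,
      |∏ i ∈ Finset.range n, tan ((angleMap l)^[i] θ)| ≤ C * r ^ n := by
  obtain ⟨q, hpq, hq⟩ := exists_between (angleMap_fixedPoint_lt_pi_div_four hl0 hl1)
  have hq0 : 0 < q := lt_of_le_of_lt (by positivity) hpq
  have hr0 : 0 < tan q := tan_pos_of_pos_of_lt_pi_div_two hq0 (by linarith [pi_pos])
  have hr1 : tan q < 1 :=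
    tan_pi_div_four ▸ tan_lt_tan_of_nonneg_of_lt_pi_div_two hq0.le (by linarith [pi_pos]) hq
  obtain ⟨N, hN⟩ := (eventually_angleMap_iterate_le hl0 hl1 hpq).exists_forall_of_atTop
  refine ⟨(max (tan a) (tan q) / tan q) ^ N, tan q, hr0.le, hr1, fun θ hθ n => ?_⟩
  have hmem (i : ℕ) : (angleMap l)^[i] θ ∈ Icc 0 a :=
    (angleMap_mapsTo hl0 hla ha.le).iterate i hθ
  have htan_nonneg (i : ℕ) : 0 ≤ tan ((angleMap l)^[i] θ) :=
    tan_nonneg_of_nonneg_of_le_pi_div_two (hmem i).1 ((hmem i).2.trans ha.le)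
  rw [abs_of_nonneg (Finset.prod_nonneg fun i _ => htan_nonneg i)]
  refine prod_range_le_mul_pow htan_nonneg
    (fun i _ =>
      (tan_le_tan_of_nonneg_of_lt_pi_div_two (hmem i).1 ha (hmem i).2).trans (le_max_left _ _))
    (fun i hi => tan_le_tan_of_nonneg_of_lt_pi_div_two (hmem i).1 (by linarith [pi_pos])
      (hN i hi θ ⟨hθ.1, hθ.2.trans ha.le⟩))
    hr0 (le_max_right _ _) n

theorem stmt_4_general (l : ℝ) (hl0 : 0 < l) (hl1 : l < 1)
    (K : Set ℝ) (hK : IsCompact K)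
    (hKsub : K ⊆ Set.Ico 0 (π / 2)) :
    (∀ θ ∈ K, Summable fun n : ℕ =>
        |(-1 : ℝ) ^ n * ∏ i ∈ Finset.range n,
          Real.tan ((fun θ => l * (π / 2 - θ))^[i] θ)|) ∧
    TendstoUniformlyOn
      (fun N θ => ∑ n ∈ Finset.range N, (-1 : ℝ) ^ n * ∏ i ∈ Finset.range n,
          Real.tan ((fun θ => l * (π / 2 - θ))^[i] θ))
      (fun θ => ∑' n : ℕ, (-1 : ℝ) ^ n * ∏ i ∈ Finset.range n,
          Real.tan ((fun θ => l * (π / 2 - θ))^[i] θ))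
      atTop K := by
  obtain ⟨a, hla, ha, hKa⟩ := hK.exists_le_lt_subset_Iic (fun θ hθ => (hKsub hθ).2)
    (show l * (π / 2) < π / 2 by nlinarith [pi_pos])
  obtain ⟨C, r, hr0, hr1, hbound⟩ := exists_abs_prod_tan_angleMap_iterate_le hl0.le hl1 hla ha
  have hterm : ∀ n, ∀ θ ∈ K, ‖(-1 : ℝ) ^ n * ∏ i ∈ Finset.range n,
      tan ((fun θ => l * (π / 2 - θ))^[i] θ)‖ ≤ C * r ^ n := fun n θ hθ => by
    rw [Real.norm_eq_abs, abs_mul, abs_neg_one_pow, one_mul]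
    exact hbound θ ⟨(hKsub hθ).1, hKa hθ⟩ n
  have hsum : Summable fun n => C * r ^ n := (summable_geometric_of_lt_one hr0 hr1).mul_left C
  exact ⟨fun θ hθ => hsum.of_nonneg_of_le (fun n => abs_nonneg _) fun n => hterm n θ hθ,
    tendstoUniformlyOn_tsum_nat hsum hterm⟩

/-- For `λ ∈ (0,1)`, the series `h_λ(θ) = Σ (−1)ⁿ ∏_{i<n} tan (g_λⁱ θ)` converges
absolutely, and uniformly on every compact subset `K` of `[0, π/2)` on which all the
iterates `g_λⁱ` stay in a compact subset `K'` of `[0, π/2)`. -/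
theorem stmt_4 (l : ℝ) (hl0 : 0 < l) (hl1 : l < 1)
    (K K' : Set ℝ) (hK : IsCompact K) (hK' : IsCompact K')
    (hKsub : K ⊆ Set.Ico 0 (π / 2)) (hK'sub : K' ⊆ Set.Ico 0 (π / 2))
    (hinv : ∀ θ ∈ K, ∀ i : ℕ, (fun θ => l * (π / 2 - θ))^[i] θ ∈ K') :
    (∀ θ ∈ K, Summable fun n : ℕ =>
        |(-1 : ℝ) ^ n * ∏ i ∈ Finset.range n,
          Real.tan ((fun θ => l * (π / 2 - θ))^[i] θ)|) ∧
    TendstoUniformlyOn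
      (fun N θ => ∑ n ∈ Finset.range N, (-1 : ℝ) ^ n * ∏ i ∈ Finset.range n,
          Real.tan ((fun θ => l * (π / 2 - θ))^[i] θ))
      (fun θ => ∑' n : ℕ, (-1 : ℝ) ^ n * ∏ i ∈ Finset.range n,
          Real.tan ((fun θ => l * (π / 2 - θ))^[i] θ))
      atTop K :=
  stmt_4_general l hl0 hl1 K hK hKsub
end

section
/- The function h_λ defined by h_λ(θ) = Σ_{n=0}^∞ (−1)ⁿ ∏_{i=0}^{n−1} tan(g_λⁱ(θ)) satisfies the functional equation h_λ(θ) = 1 − h_λ(g_λ(θ))·tan θ for all θ ∈ [0, π/2) for which both sides are defined. -/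
/-!
Writing `(-1)ⁿ ∏_{i<n} tan (gⁱ θ)` as `∏_{i<n} u (gⁱ θ)` with `u = -tan`, peeling off the
`n = 0` term and the `i = 0` factor shows `h θ = 1 + u θ · h (g θ)`.
-/

open Real Finset

section IterateProd

variable {α M : Type*} [CommMonoid M]

theorem prod_range_succ_iterate (u : α → M) (g : α → α) (x : α) (n : ℕ) :
    ∏ i ∈ range (n + 1), u (g^[i] x) = u x * ∏ i ∈ range n, u (g^[i] (g x)) := by
  simp only [prod_range_succ', Function.iterate_succ_apply, Function.iterate_zero_apply]
  exact mul_comm _ _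

theorem tsum_prod_range_iterate {K : Type*} [Field K] [TopologicalSpace K] [IsTopologicalRing K]
    [T2Space K] (u : α → K) (g : α → α) (x : α)
    (hs : Summable fun n : ℕ => ∏ i ∈ range n, u (g^[i] x)) :
    ∑' n : ℕ, ∏ i ∈ range n, u (g^[i] x) = 1 + u x * ∑' n : ℕ, ∏ i ∈ range n, u (g^[i] (g x)) := by
  rw [hs.tsum_eq_zero_add, ← tsum_mul_left]
  simp only [prod_range_succ_iterate, prod_range_zero]

end IterateProd

theorem stmt_5_general (l : ℝ) (θ : ℝ) :
    let g : ℝ → ℝ := fun x => l * (π / 2 - x)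
    let h : ℝ → ℝ := fun x =>
      ∑' n : ℕ, (-1 : ℝ) ^ n * ∏ i ∈ Finset.range n, Real.tan (g^[i] x)
    (Summable fun n : ℕ =>
        (-1 : ℝ) ^ n * ∏ i ∈ Finset.range n, Real.tan (g^[i] θ)) →
    (Summable fun n : ℕ =>
        (-1 : ℝ) ^ n * ∏ i ∈ Finset.range n, Real.tan (g^[i] (g θ))) →
    h θ = 1 - h (g θ) * Real.tan θ := by
  intro g h hs _
  have alternating_eq_prod_neg : ∀ x n,
      (-1 : ℝ) ^ n * ∏ i ∈ range n, tan (g^[i] x) = ∏ i ∈ range n, -tan (g^[i] x) := by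
    intro x n
    rw [prod_neg, card_range]
  simp only [h, alternating_eq_prod_neg] at hs ⊢
  rw [tsum_prod_range_iterate (fun x => -tan x) g θ hs]
  ring

/-- The function `h_λ(θ) = Σ (−1)ⁿ ∏_{i<n} tan (g_λⁱ θ)` satisfies the functional
equation `h_λ(θ) = 1 − h_λ(g_λ θ) · tan θ` for all `θ ∈ [0, π/2)` where both sides
are defined (i.e. where the defining series converge). -/
theorem stmt_5 (l : ℝ) (hl0 : 0 < l) (hl1 : l < 1) (θ : ℝ)
    (hθ : θ ∈ Set.Ico 0 (π / 2)) :
    let g : ℝ → ℝ := fun x => l * (π / 2 - x)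
    let h : ℝ → ℝ := fun x =>
      ∑' n : ℕ, (-1 : ℝ) ^ n * ∏ i ∈ Finset.range n, Real.tan (g^[i] x)
    (Summable fun n : ℕ =>
        (-1 : ℝ) ^ n * ∏ i ∈ Finset.range n, Real.tan (g^[i] θ)) →
    (Summable fun n : ℕ =>
        (-1 : ℝ) ^ n * ∏ i ∈ Finset.range n, Real.tan (g^[i] (g θ))) →
    h θ = 1 - h (g θ) * Real.tan θ :=
  stmt_5_general l θ
end

section
/- For λ ∈ (0,1), let θ_λ = πλ/(2(1+λ)) and let h_λ be the fixed point of the graph transform Γ(h)(θ) = 1 − h(g_λ(θ)) tan θ with g_λ(θ) = λ(π/2 − θ). Then the derivative of h_λ at θ_λ equals h_λ'(θ_λ) = − sec²θ_λ / ((1 − λ tan θ_λ)(1 + tan θ_λ)), which is strictly negative. -/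
open Real Filter Topology

/-!
Near its fixed point `θ_λ`, `g_λ θ = λ (π/2 − θ)` has slope `−λ`, so differentiating
`h θ = 1 − h (g_λ θ) tan θ` at `θ_λ` gives the linear equation
`h' = λ h' tan θ_λ − h(θ_λ) sec² θ_λ`, while the equation itself at `θ_λ` gives
`h(θ_λ) = 1 / (1 + tan θ_λ)`. Since `θ_λ < π/4`, `0 < tan θ_λ < 1`, so `1 − λ tan θ_λ > 0`.
-/

section GraphTransform

variable {h g : ℝ → ℝ} {c : ℝ}

lemma mul_one_add_tan_eq_one_of_eventuallyEq
    (hfe : h =ᶠ[𝓝 c] fun θ => 1 - h (g θ) * tan θ) (hgc : g c = c) :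
    h c * (1 + tan c) = 1 := by
  have := hfe.eq_of_nhds
  rw [hgc] at this
  linear_combination this

lemma deriv_eq_of_eventuallyEq_one_sub_comp_mul_tan {g' : ℝ}
    (hfe : h =ᶠ[𝓝 c] fun θ => 1 - h (g θ) * tan θ) (hg : HasDerivAt g g' c)
    (hgc : g c = c) (hh : DifferentiableAt ℝ h c) (hcos : cos c ≠ 0) :
    deriv h c = -(deriv h c * g' * tan c + h c * (1 / cos c ^ 2)) := by
  have hcomp : HasDerivAt (h ∘ g) (deriv h c * g') c := by
    rw [← hgc] at hh
    simpa only [hgc] using hh.hasDerivAt.comp c hg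
  have hrhs : HasDerivAt (fun θ => 1 - h (g θ) * tan θ)
      (-(deriv h c * g' * tan c + h c * (1 / cos c ^ 2))) c := by
    simpa only [Pi.mul_apply, Function.comp_apply, hgc] using
      (hcomp.mul (hasDerivAt_tan hcos)).const_sub 1
  exact hfe.deriv_eq.trans hrhs.deriv

lemma deriv_eq_neg_div_of_eventuallyEq_one_sub_comp_mul_tan {g' : ℝ}
    (hfe : h =ᶠ[𝓝 c] fun θ => 1 - h (g θ) * tan θ) (hg : HasDerivAt g g' c)
    (hgc : g c = c) (hh : DifferentiableAt ℝ h c) (hcos : cos c ≠ 0)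
    (hg' : 1 + g' * tan c ≠ 0) (htan : 1 + tan c ≠ 0) :
    deriv h c = -(1 / cos c ^ 2 / ((1 + g' * tan c) * (1 + tan c))) := by
  have hval := mul_one_add_tan_eq_one_of_eventuallyEq hfe hgc
  have hder := deriv_eq_of_eventuallyEq_one_sub_comp_mul_tan hfe hg hgc hh hcos
  rw [← neg_div, eq_div_iff (mul_ne_zero hg' htan)]
  linear_combination (1 + tan c) * hder - 1 / cos c ^ 2 * hval

end GraphTransform

lemma mul_pi_div_two_sub_div_eq {l : ℝ} (hl : 1 + l ≠ 0) :
    l * (π / 2 - π * l / (2 * (1 + l))) = π * l / (2 * (1 + l)) := by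
  field_simp
  ring

lemma pi_mul_div_two_mul_one_add_mem_Ioo {l : ℝ} (hl0 : 0 < l) (hl1 : l < 1) :
    π * l / (2 * (1 + l)) ∈ Set.Ioo 0 (π / 4) := by
  have hπ := pi_pos
  refine ⟨by positivity, ?_⟩
  rw [div_lt_div_iff₀ (by positivity) (by norm_num)]
  nlinarith

lemma tan_mem_Ioo_of_mem_Ioo_pi_div_four {c : ℝ} (hc : c ∈ Set.Ioo 0 (π / 4)) :
    tan c ∈ Set.Ioo 0 1 := by
  have hπ := pi_pos
  refine ⟨tan_pos_of_pos_of_lt_pi_div_two hc.1 (by linarith [hc.2]), ?_⟩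
  rw [← tan_pi_div_four]
  exact tan_lt_tan_of_nonneg_of_lt_pi_div_two hc.1.le (by linarith) hc.2

/-- Let `λ ∈ (0,1)`, `θ_λ = πλ/(2(1+λ))`, and let `h` be a fixed point of the graph
transform, i.e. `h θ = 1 − h (g_λ θ) · tan θ` on `(0, π/2)`, differentiable at `θ_λ`.
Then `h'(θ_λ) = − sec² θ_λ / ((1 − λ tan θ_λ)(1 + tan θ_λ)) < 0`. -/
theorem stmt_6 (l : ℝ) (hl0 : 0 < l) (hl1 : l < 1) (h : ℝ → ℝ)
    (hfe : ∀ θ ∈ Set.Ioo 0 (π / 2),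
      h θ = 1 - h (l * (π / 2 - θ)) * Real.tan θ)
    (hdiff : DifferentiableAt ℝ h (π * l / (2 * (1 + l)))) :
    deriv h (π * l / (2 * (1 + l))) =
      -((1 / Real.cos (π * l / (2 * (1 + l))) ^ 2) /
        ((1 - l * Real.tan (π * l / (2 * (1 + l)))) *
          (1 + Real.tan (π * l / (2 * (1 + l)))))) ∧
    deriv h (π * l / (2 * (1 + l))) < 0 := by
  set c := π * l / (2 * (1 + l))
  have hc : c ∈ Set.Ioo 0 (π / 4) := pi_mul_div_two_mul_one_add_mem_Ioo hl0 hl1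
  have htan : tan c ∈ Set.Ioo 0 1 := tan_mem_Ioo_of_mem_Ioo_pi_div_four hc
  have hc2 : c ∈ Set.Ioo 0 (π / 2) := ⟨hc.1, hc.2.trans (by linarith [pi_pos])⟩
  have hcos : cos c ≠ 0 := (cos_pos_of_mem_Ioo ⟨by linarith [hc2.1, pi_pos], hc2.2⟩).ne'
  have hlt : 0 < 1 - l * tan c := by nlinarith [htan.2]
  have hg : HasDerivAt (fun θ => l * (π / 2 - θ)) (-l) c := by
    simpa using ((hasDerivAt_id c).const_sub (π / 2)).const_mul l
  have hfe' : h =ᶠ[𝓝 c] fun θ => 1 - h (l * (π / 2 - θ)) * tan θ :=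
    eventually_of_mem (Ioo_mem_nhds hc2.1 hc2.2) hfe
  have hkey := deriv_eq_neg_div_of_eventuallyEq_one_sub_comp_mul_tan hfe' hg
    (mul_pi_div_two_sub_div_eq (by linarith)) hdiff hcos (by linarith) (by linarith [htan.1])
  rw [neg_mul, ← sub_eq_add_neg] at hkey
  refine ⟨hkey, ?_⟩
  rw [hkey, neg_lt_zero]
  have := htan.1
  positivity
end

section
/- For each n ≥ 1, set θ_n(λ) = (π/2)·λ(1 − λ)/(1 − λ^{n+2}) and S_n(θ) = Σ_{i=0}^{n} tan(λⁱθ). Then λ ↦ S_n(θ_n(λ)) is strictly increasing on (0,1), vanishes in the limit λ → 0⁺, and exceeds 1 in the limit λ → 1⁻; consequently there is a unique c_n ∈ (0,1) with S_n(θ_n(c_n)) = 1, and S_n(θ_n(λ)) < 1 if and only if λ ∈ (0, c_n). -/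
/-!
On `(0, 1)` the `i`-th angle `λⁱ θ_n(λ)` equals `ψᵢ(λ) = (π/2) λ^(i+1) / D(λ)` with
`D(λ) = 1 + λ + ⋯ + λ^(n+1)`, and this expression is smooth on all of `[0, 1]`: the sum
`Σ tan ψᵢ` vanishes at `0` and equals `(n + 1) tan (π / (2 (n + 2))) > 1` at `1`.

Its derivative is `Σ (1 + tan² ψᵢ) ψᵢ'`. The `ψᵢ'` add up to `Q = (π/2) D' / D² > 0`, and although
single `ψᵢ'` can be negative, comparing coefficients shows `ψᵢ' + λ^(2i+2) Q ≥ 0`. Hence the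
derivative is at least `Q (1 - Σ tan² ψᵢ · λ^(2i+2))`, and the bracket is positive because
`ψᵢ ≤ π/6`, where `tan² ψ ≤ (4/3) ψ²`. The intermediate value theorem and strict monotonicity
then give the unique crossing point `c_n`.
-/

open Real Filter Finset

lemma tan_sq_le_of_le_pi_div_six {ψ : ℝ} (h0 : 0 ≤ ψ) (h6 : ψ ≤ π / 6) :
    tan ψ ^ 2 ≤ 4 / 3 * ψ ^ 2 := by
  have hcos : √3 / 2 ≤ cos ψ := by
    rw [← cos_pi_div_six]
    exact cos_le_cos_of_nonneg_of_le_pi h0 (by linarith [pi_pos]) h6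
  have hcos_sq : 3 / 4 ≤ cos ψ ^ 2 := by
    nlinarith [sq_sqrt (show (0 : ℝ) ≤ 3 by norm_num), sqrt_nonneg 3]
  have hsin_sq : sin ψ ^ 2 ≤ ψ ^ 2 := sin_sq_le_sq
  rw [tan_eq_sin_div_cos, div_pow, div_le_iff₀ (by linarith)]
  nlinarith

lemma StrictMonoOn.existsUnique_eq_and_lt_iff {α β : Type*} [LinearOrder α] [LinearOrder β]
    {f : α → β} {s : Set α} (hf : StrictMonoOn f s) {c : α} (hc : c ∈ s) {y : β}
    (hfc : f c = y) : ∃! c, c ∈ s ∧ f c = y ∧ ∀ l ∈ s, (f l < y ↔ l < c) := by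
  refine ⟨c, ⟨hc, hfc, fun l hl => hfc ▸ hf.lt_iff_lt hl hc⟩, ?_⟩
  rintro c' ⟨hc', hfc', -⟩
  exact hf.injOn hc' hc (hfc'.trans hfc.symm)

namespace SquareBilliard

noncomputable section

def denom (n : ℕ) (x : ℝ) : ℝ := ∑ k ∈ range (n + 2), x ^ k

def denomDeriv (n : ℕ) (x : ℝ) : ℝ := ∑ k ∈ range (n + 1), ((k : ℝ) + 1) * x ^ k

def angle (n i : ℕ) (x : ℝ) : ℝ := π / 2 * x ^ (i + 1) / denom n x

def angleDeriv (n i : ℕ) (x : ℝ) : ℝ :=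
  π / 2 * (((i : ℝ) + 1) * x ^ i * denom n x - x ^ (i + 1) * denomDeriv n x) / denom n x ^ 2

def tanSum (n : ℕ) (x : ℝ) : ℝ := ∑ i ∈ range (n + 1), tan (angle n i x)

end

variable {n : ℕ} {x : ℝ}

lemma denom_eq_one_add (n : ℕ) (x : ℝ) : denom n x = 1 + ∑ k ∈ range (n + 1), x ^ (k + 1) := by
  rw [denom, sum_range_succ', pow_zero, add_comm]

lemma hasDerivAt_denom (n : ℕ) (x : ℝ) : HasDerivAt (denom n) (denomDeriv n x) x := by
  rw [show denom n = _ from funext (denom_eq_one_add n)]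
  refine ((HasDerivAt.fun_sum fun k (_ : k ∈ range (n + 1)) =>
    hasDerivAt_pow (k + 1) x).const_add 1).congr_deriv ?_
  simp [denomDeriv]

lemma one_le_denom (n : ℕ) (hx : 0 ≤ x) : 1 ≤ denom n x := by
  rw [denom_eq_one_add]
  have := sum_nonneg fun k (_ : k ∈ range (n + 1)) => pow_nonneg hx (k + 1)
  linarith

lemma three_mul_le_denom (hn : 1 ≤ n) (hx : 0 ≤ x) : 3 * x ≤ denom n x := by
  have hsplit : ∑ k ∈ range 3, x ^ k + ∑ k ∈ Ico 3 (n + 2), x ^ k = denom n x :=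
    sum_range_add_sum_Ico _ (by omega)
  have htail := sum_nonneg fun k (_ : k ∈ Ico 3 (n + 2)) => pow_nonneg hx k
  simp only [sum_range_succ, sum_range_zero] at hsplit
  nlinarith [sq_nonneg (1 - x)]

lemma angle_nonneg (i : ℕ) (hx : 0 ≤ x) : 0 ≤ angle n i x := by
  have := one_le_denom n hx
  unfold angle
  positivity

lemma angle_le_pi_div_six (i : ℕ) (hn : 1 ≤ n) (hx0 : 0 ≤ x) (hx1 : x ≤ 1) :
    angle n i x ≤ π / 6 := by
  have hD := one_le_denom n hx0
  have hpow : x ^ (i + 1) ≤ x := pow_le_of_le_one hx0 hx1 (by omega)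
  rw [angle, div_le_iff₀ (by linarith)]
  nlinarith [three_mul_le_denom hn hx0, pi_pos]

lemma cos_angle_pos (i : ℕ) (hn : 1 ≤ n) (hx0 : 0 ≤ x) (hx1 : x ≤ 1) :
    0 < cos (angle n i x) := by
  have := angle_le_pi_div_six i hn hx0 hx1
  exact cos_pos_of_mem_Ioo
    ⟨by linarith [angle_nonneg (n := n) i hx0, pi_pos], by linarith [pi_pos]⟩

lemma sum_sub_mul_pow_le_pow_mul_denomDeriv {i : ℕ} (hi : i ≤ n) (hx : 0 ≤ x) :
    ∑ k ∈ range (n + 1), ((k : ℝ) - i) * x ^ (k + 1) ≤ x ^ (i + 2) * denomDeriv n x := by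
  rw [← sum_range_add_sum_Ico _ (show i + 1 ≤ n + 1 by omega)]
  have hhead : ∑ k ∈ range (i + 1), ((k : ℝ) - i) * x ^ (k + 1) ≤ 0 := by
    refine sum_nonpos fun k hk => mul_nonpos_of_nonpos_of_nonneg ?_ (pow_nonneg hx _)
    have : (k : ℝ) ≤ i := by exact_mod_cast Nat.lt_succ_iff.1 (mem_range.1 hk)
    linarith
  -- after the shift `k = i + 1 + j` the tail is an initial segment of `x ^ (i + 2) * denomDeriv`
  have htail : ∑ k ∈ Ico (i + 1) (n + 1), ((k : ℝ) - i) * x ^ (k + 1)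
      = x ^ (i + 2) * ∑ j ∈ range (n - i), ((j : ℝ) + 1) * x ^ j := by
    rw [sum_Ico_eq_sum_range, show n + 1 - (i + 1) = n - i by omega, mul_sum]
    refine sum_congr rfl fun j _ => ?_
    push_cast
    ring
  have hsub : ∑ j ∈ range (n - i), ((j : ℝ) + 1) * x ^ j ≤ denomDeriv n x :=
    sum_le_sum_of_subset_of_nonneg (range_subset_range.2 (by omega))
      fun j _ _ => by positivity
  have := mul_le_mul_of_nonneg_left hsub (pow_nonneg hx (i + 2))
  linarith

lemma hasDerivAt_angle (n i : ℕ) (hx : 0 ≤ x) :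
    HasDerivAt (angle n i) (angleDeriv n i x) x := by
  have hnum : HasDerivAt (fun y => π / 2 * y ^ (i + 1)) (π / 2 * (((i : ℝ) + 1) * x ^ i)) x := by
    simpa using (hasDerivAt_pow (i + 1) x).const_mul (π / 2)
  refine (hnum.div (hasDerivAt_denom n x) (by linarith [one_le_denom n hx])).congr_deriv ?_
  unfold angleDeriv
  ring

lemma sum_angleDeriv (n : ℕ) (x : ℝ) :
    ∑ i ∈ range (n + 1), angleDeriv n i x = π / 2 * denomDeriv n x / denom n x ^ 2 := by
  simp only [angleDeriv, ← sum_div, ← mul_sum, sum_sub_distrib, ← sum_mul]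
  rw [denom_eq_one_add]
  simp only [denomDeriv, mul_comm ((_ : ℝ) + 1)]
  ring

lemma angleDeriv_add_nonneg {i : ℕ} (hi : i ≤ n) (hx : 0 ≤ x) :
    0 ≤ angleDeriv n i x + x ^ (2 * i + 2) * (π / 2 * denomDeriv n x / denom n x ^ 2) := by
  have hpoly : 0 ≤ ((i : ℝ) + 1) * denom n x - x * denomDeriv n x
      + x ^ (i + 2) * denomDeriv n x := by
    have h := sum_sub_mul_pow_le_pow_mul_denomDeriv hi hx
    have hx_mul : x * denomDeriv n x = ∑ k ∈ range (n + 1), ((k : ℝ) + 1) * x ^ (k + 1) := by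
      rw [denomDeriv, mul_sum]
      exact sum_congr rfl fun k _ => by ring
    have hsum : ∑ k ∈ range (n + 1), ((k : ℝ) - i) * x ^ (k + 1)
        = x * denomDeriv n x - (i + 1) * (denom n x - 1) := by
      rw [hx_mul, denom_eq_one_add, add_sub_cancel_left, mul_sum, ← sum_sub_distrib]
      exact sum_congr rfl fun k _ => by ring
    linarith
  have heq : angleDeriv n i x + x ^ (2 * i + 2) * (π / 2 * denomDeriv n x / denom n x ^ 2)
      = π / 2 * x ^ i * (((i : ℝ) + 1) * denom n x - x * denomDeriv n x
        + x ^ (i + 2) * denomDeriv n x) / denom n x ^ 2 := by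
    unfold angleDeriv
    ring
  rw [heq]
  have := pi_pos
  positivity

lemma denomDeriv_pos (n : ℕ) (hx : 0 ≤ x) : 0 < denomDeriv n x := by
  rw [denomDeriv, sum_range_succ']
  positivity

lemma sum_tan_sq_angle_mul_pow_lt_one (hn : 1 ≤ n) (hx0 : 0 ≤ x) (hx1 : x ≤ 1) :
    ∑ i ∈ range (n + 1), tan (angle n i x) ^ 2 * x ^ (2 * i + 2) < 1 := by
  have hD := one_le_denom n hx0
  have hterm : ∀ i ∈ range (n + 1),
      tan (angle n i x) ^ 2 * x ^ (2 * i + 2) ≤ π ^ 2 / 3 * x ^ (i + 1) / denom n x ^ 2 := by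
    intro i _
    calc tan (angle n i x) ^ 2 * x ^ (2 * i + 2)
        ≤ 4 / 3 * angle n i x ^ 2 * x ^ (2 * i + 2) := by
          gcongr
          exact tan_sq_le_of_le_pi_div_six (angle_nonneg i hx0) (angle_le_pi_div_six i hn hx0 hx1)
      _ = π ^ 2 / 3 * x ^ (4 * i + 4) / denom n x ^ 2 := by
          unfold angle
          field_simp
          ring
      _ ≤ π ^ 2 / 3 * x ^ (i + 1) / denom n x ^ 2 := by
          gcongr π ^ 2 / 3 * ?_ / _
          exact pow_le_pow_of_le_one hx0 hx1 (by omega)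
  have hsum : ∑ i ∈ range (n + 1), π ^ 2 / 3 * x ^ (i + 1) / denom n x ^ 2
      = π ^ 2 / 3 * (denom n x - 1) / denom n x ^ 2 := by
    rw [← sum_div, ← mul_sum, denom_eq_one_add, add_sub_cancel_left]
  refine (sum_le_sum hterm).trans_lt ?_
  rw [hsum, div_lt_one (by positivity)]
  have hpi_sq : π ^ 2 < 12 := by nlinarith [pi_pos, pi_lt_d2]
  have hk : 0 < π ^ 2 / 3 * (4 - π ^ 2 / 3) := mul_pos (by positivity) (by linarith)
  -- `D ^ 2 - k (D - 1) = (D - k / 2) ^ 2 + k (4 - k) / 4` with `k = π ^ 2 / 3`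
  nlinarith [sq_nonneg (denom n x - π ^ 2 / 6)]

lemma hasDerivAt_tanSum (hn : 1 ≤ n) (hx0 : 0 ≤ x) (hx1 : x ≤ 1) :
    HasDerivAt (tanSum n)
      (∑ i ∈ range (n + 1), (1 + tan (angle n i x) ^ 2) * angleDeriv n i x) x := by
  refine HasDerivAt.fun_sum fun i _ => ?_
  have hcos := (cos_angle_pos i hn hx0 hx1).ne'
  refine ((hasDerivAt_tan hcos).comp x (hasDerivAt_angle n i hx0)).congr_deriv ?_
  rw [one_div, ← inv_one_add_tan_sq hcos, inv_inv]

lemma deriv_tanSum_pos (hn : 1 ≤ n) (hx0 : 0 ≤ x) (hx1 : x ≤ 1) :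
    0 < deriv (tanSum n) x := by
  rw [(hasDerivAt_tanSum hn hx0 hx1).deriv]
  set Q := π / 2 * denomDeriv n x / denom n x ^ 2
  have hQ : 0 < Q := by
    have := denomDeriv_pos n hx0
    have := one_le_denom n hx0
    have := pi_pos
    positivity
  have hweights := sum_tan_sq_angle_mul_pow_lt_one hn hx0 hx1
  calc 0 < Q * (1 - ∑ i ∈ range (n + 1), tan (angle n i x) ^ 2 * x ^ (2 * i + 2)) :=
        mul_pos hQ (by linarith)
    _ = ∑ i ∈ range (n + 1),
          (angleDeriv n i x - tan (angle n i x) ^ 2 * (x ^ (2 * i + 2) * Q)) := by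
        rw [sum_sub_distrib, sum_angleDeriv, mul_sub, mul_one, mul_sum]
        exact congrArg _ (sum_congr rfl fun _ _ => by ring)
    _ ≤ ∑ i ∈ range (n + 1), (1 + tan (angle n i x) ^ 2) * angleDeriv n i x := by
        refine sum_le_sum fun i hi => ?_
        nlinarith [mul_nonneg (sq_nonneg (tan (angle n i x)))
          (angleDeriv_add_nonneg (mem_range_succ_iff.1 hi) hx0)]

lemma continuousOn_tanSum (hn : 1 ≤ n) : ContinuousOn (tanSum n) (Set.Icc 0 1) :=
  fun _ hx => (hasDerivAt_tanSum hn hx.1 hx.2).continuousAt.continuousWithinAt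

lemma strictMonoOn_tanSum (hn : 1 ≤ n) : StrictMonoOn (tanSum n) (Set.Icc 0 1) := by
  refine strictMonoOn_of_deriv_pos (convex_Icc 0 1) (continuousOn_tanSum hn) fun x hx => ?_
  rw [interior_Icc] at hx
  exact deriv_tanSum_pos hn hx.1.le hx.2.le

lemma tanSum_zero (n : ℕ) : tanSum n 0 = 0 := by
  simp [tanSum, angle]

lemma one_lt_tanSum_one (hn : 1 ≤ n) : 1 < tanSum n 1 := by
  have hn' : (1 : ℝ) ≤ n := by exact_mod_cast hn
  set y := π / (2 * (n + 2))
  have hangle : ∀ i, angle n i 1 = y := fun i => by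
    simp only [angle, denom, one_pow, sum_const, card_range, nsmul_eq_mul, mul_one, y]
    push_cast
    field_simp
  have hy : y < tan y := lt_tan (by positivity) (by
    rw [div_lt_div_iff_of_pos_left pi_pos (by positivity) two_pos]
    linarith)
  have hy1 : 1 ≤ (n + 1) * y := by
    rw [mul_div_assoc', le_div_iff₀ (by positivity)]
    nlinarith [pi_gt_three]
  simp only [tanSum, hangle, sum_const, card_range, nsmul_eq_mul]
  push_cast
  nlinarith

lemma pow_mul_theta_eq_angle (n i : ℕ) (hx0 : 0 ≤ x) (hx1 : x ≠ 1) :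
    x ^ i * (π / 2 * x * (1 - x) / (1 - x ^ (n + 2))) = angle n i x := by
  have hD := one_le_denom n hx0
  have h1 : 1 - x ≠ 0 := sub_ne_zero.2 hx1.symm
  rw [← mul_neg_geom_sum, ← denom, angle]
  field_simp
  ring

end SquareBilliard

open SquareBilliard in
/-- For `n ≥ 1`, with `θ_n(λ) = (π/2) λ(1−λ)/(1−λ^{n+2})` and
`S_n(θ) = Σ_{i≤n} tan(λⁱθ)`, the map `λ ↦ S_n(θ_n(λ))` is strictly increasing on
`(0,1)`, tends to `0` as `λ → 0⁺`, exceeds `1` in the limit `λ → 1⁻`; hence there is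
a unique `c_n ∈ (0,1)` with `S_n(θ_n(c_n)) = 1`, and `S_n(θ_n(λ)) < 1 ↔ λ < c_n`
on `(0,1)`. -/
theorem stmt_8 (n : ℕ) (hn : 1 ≤ n) :
    let θ : ℝ → ℝ := fun l => (π / 2) * l * (1 - l) / (1 - l ^ (n + 2))
    let F : ℝ → ℝ := fun l => ∑ i ∈ Finset.range (n + 1), Real.tan (l ^ i * θ l)
    StrictMonoOn F (Set.Ioo 0 1) ∧
    Tendsto F (nhdsWithin 0 (Set.Ioi 0)) (nhds 0) ∧
    (∃ L : ℝ, 1 < L ∧ Tendsto F (nhdsWithin 1 (Set.Iio 1)) (nhds L)) ∧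
    ∃! c : ℝ, c ∈ Set.Ioo (0 : ℝ) 1 ∧ F c = 1 ∧
      ∀ l ∈ Set.Ioo (0 : ℝ) 1, (F l < 1 ↔ l < c) := by
  intro θ F
  have hF : Set.EqOn F (tanSum n) (Set.Ioo 0 1) := fun l hl =>
    sum_congr rfl fun i _ => congrArg tan (pow_mul_theta_eq_angle n i hl.1.le hl.2.ne)
  have hmono : StrictMonoOn F (Set.Ioo 0 1) :=
    ((strictMonoOn_tanSum hn).mono Set.Ioo_subset_Icc_self).congr hF.symm
  have hlim : ∀ x ∈ Set.Icc (0 : ℝ) 1,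
      Tendsto F (nhdsWithin x (Set.Ioo 0 1)) (nhds (tanSum n x)) := fun x hx =>
    ((continuousOn_tanSum hn x hx).mono Set.Ioo_subset_Icc_self).tendsto.congr'
      (eventually_nhdsWithin_of_forall fun l hl => (hF hl).symm)
  obtain ⟨c, hc, hc1⟩ : ∃ c ∈ Set.Ioo 0 1, tanSum n c = 1 :=
    intermediate_value_Ioo zero_le_one (continuousOn_tanSum hn)
      ⟨by rw [tanSum_zero]; exact one_pos, one_lt_tanSum_one hn⟩
  refine ⟨hmono, ?_, ⟨_, one_lt_tanSum_one hn, ?_⟩,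
    hmono.existsUnique_eq_and_lt_iff hc ((hF hc).trans hc1)⟩
  · simpa [tanSum_zero, nhdsWithin_Ioo_eq_nhdsGT] using hlim 0 ⟨le_rfl, zero_le_one⟩
  · simpa [nhdsWithin_Ioo_eq_nhdsLT] using hlim 1 ⟨zero_le_one, le_rfl⟩
end

section
/- For n ≥ 1, λ ∈ (0,1), and θ_n = (π/2)·λ(1 − λ)/(1 − λ^{n+2}), the inequality Σ_{i=0}^{n−1} tan(λⁱθ_n) + tan(λ⁻¹θ_n) > 1 holds. -/
open Real

/-! Since `tan x > x` on `(0, π/2)`, the left side exceeds `θ (1 + λ + ⋯ + λⁿ⁻¹) + θ/λ`,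
which telescopes to `(π/2)(1 − λⁿ⁺¹)/(1 − λⁿ⁺²)`; for `n ≥ 1` this ratio is at least `2/3`,
and `π/3 > 1`. -/

lemma geom_sum_mul_add_inv_mul {l : ℝ} (hl0 : l ≠ 0) (hl1 : l ≠ 1) (c : ℝ) (n : ℕ) :
    (∑ i ∈ Finset.range n, l ^ i) * (c * l * (1 - l) / (1 - l ^ (n + 2))) +
        l⁻¹ * (c * l * (1 - l) / (1 - l ^ (n + 2))) =
      c * (1 - l ^ (n + 1)) / (1 - l ^ (n + 2)) := by
  have h1l : 1 - l ≠ 0 := sub_ne_zero.mpr hl1.symm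
  rw [geom_sum_eq hl1]
  field_simp
  ring

lemma two_thirds_le_one_sub_pow_div {l : ℝ} (hl0 : 0 ≤ l) (hl1 : l < 1) {n : ℕ} (hn : 1 ≤ n) :
    2 / 3 ≤ (1 - l ^ (n + 1)) / (1 - l ^ (n + 2)) := by
  have hden : 0 < 1 - l ^ (n + 2) := sub_pos.mpr (pow_lt_one₀ hl0 hl1 (by omega))
  have hpow : l ^ (n + 1) ≤ l ^ 2 := pow_le_pow_of_le_one hl0 hl1.le (by omega)
  rw [le_div_iff₀ hden, pow_succ l (n + 1)]
  -- reduces to `l²(3 − 2l) ≤ 1`, i.e. `(1 − l)²(1 + 2l) ≥ 0`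
  nlinarith [mul_le_mul_of_nonneg_right hpow (by linarith : (0 : ℝ) ≤ 3 - 2 * l),
    mul_nonneg (sq_nonneg (1 - l)) (by linarith : (0 : ℝ) ≤ 1 + 2 * l)]

/-- For `n ≥ 1`, `λ ∈ (0,1)`, `θ_n = (π/2) λ(1−λ)/(1−λ^{n+2})`, assuming all the
arguments `λⁱ θ_n` (for `i < n`) and `λ⁻¹ θ_n` lie in `(0, π/2)`, one has
`Σ_{i<n} tan(λⁱ θ_n) + tan(λ⁻¹ θ_n) > 1`. -/
theorem stmt_9 (n : ℕ) (hn : 1 ≤ n) (l : ℝ) (hl0 : 0 < l) (hl1 : l < 1) :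
    let θ : ℝ := (π / 2) * l * (1 - l) / (1 - l ^ (n + 2))
    (∀ i < n, l ^ i * θ ∈ Set.Ioo 0 (π / 2)) →
    l⁻¹ * θ ∈ Set.Ioo 0 (π / 2) →
    1 < (∑ i ∈ Finset.range n, Real.tan (l ^ i * θ)) + Real.tan (l⁻¹ * θ) := by
  intro θ hpow hinv
  have hargs : 1 < (∑ i ∈ Finset.range n, l ^ i * θ) + l⁻¹ * θ := by
    rw [← Finset.sum_mul, geom_sum_mul_add_inv_mul hl0.ne' hl1.ne, mul_div_assoc]
    nlinarith [two_thirds_le_one_sub_pow_div hl0.le hl1 hn, pi_gt_three]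
  have hsum : (∑ i ∈ Finset.range n, l ^ i * θ) < ∑ i ∈ Finset.range n, tan (l ^ i * θ) :=
    Finset.sum_lt_sum_of_nonempty ⟨0, Finset.mem_range.mpr hn⟩ fun i hi =>
      lt_tan (hpow i (Finset.mem_range.mp hi)).1 (hpow i (Finset.mem_range.mp hi)).2
  linarith [lt_tan hinv.1 hinv.2]
end

section
/- For every λ ∈ (0,1) and n ≥ 1, S_{n+1}(θ_{n+1}) > S_n(θ_n), where S_n(θ) = Σ_{i=0}^{n} tan(λⁱθ) and θ_n = (π/2)·λ(1 − λ)/(1 − λ^{n+2}). -/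
/-! Write `a = θ_n`, `b = θ_{n+1}` and `D = 1 - λ^{n+2}`. Passing from `n` to `n + 1` lowers the
angle from `a` to `b` and adds the term `tan (λ^{n+1} b) ≥ λ^{n+1} b`. On `[-a, a]` with `a < 1`
we have `cos x cos y ≥ (1 - a²/2)² ≥ 1 - a²`, so the loss `S_n(a) - S_n(b)` is at most
`(a - b) (Σ_{i ≤ n} λⁱ) / (1 - a²)`. Since `(a - b) D = λ^{n+2} (1 - λ) b`, this is smaller
than `λ^{n+1} b` exactly when `a² D < 1 - λ`, an elementary inequality in `λ` once `π² < 10` and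
`n ≥ 1`. -/

open Real Finset

namespace DissipativeSquareBilliard

lemma tan_sub_tan_le {x y c : ℝ} (hyx : y ≤ x) (hx : x ^ 2 ≤ c ^ 2) (hy : y ^ 2 ≤ c ^ 2)
    (hc : c ^ 2 < 1) : tan x - tan y ≤ (x - y) / (1 - c ^ 2) := by
  have hcos_x : 1 - c ^ 2 / 2 ≤ cos x := by linarith [one_sub_sq_div_two_le_cos (x := x)]
  have hcos_y : 1 - c ^ 2 / 2 ≤ cos y := by linarith [one_sub_sq_div_two_le_cos (x := y)]
  have hcos_mul : 1 - c ^ 2 ≤ cos x * cos y := by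
    nlinarith [mul_le_mul hcos_x hcos_y (by linarith) (by linarith), sq_nonneg (c ^ 2)]
  have htan : tan x - tan y = sin (x - y) / (cos x * cos y) := by
    rw [tan_eq_sin_div_cos, tan_eq_sin_div_cos, sin_sub,
      div_sub_div _ _ (by linarith) (by linarith)]
  rw [htan]
  exact div_le_div₀ (by linarith) (sin_le (by linarith)) (by linarith) hcos_mul

/-- `S_m(x)` in the notation of the statement. -/
noncomputable def tanSum (l : ℝ) (m : ℕ) (x : ℝ) : ℝ :=
  ∑ i ∈ range (m + 1), tan (l ^ i * x)

/-- `θ_m` in the notation of the statement. -/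
noncomputable def periodicAngle (l : ℝ) (m : ℕ) : ℝ :=
  π / 2 * l * (1 - l) / (1 - l ^ (m + 2))

lemma tanSum_succ (l : ℝ) (m : ℕ) (x : ℝ) :
    tanSum l (m + 1) x = tanSum l m x + tan (l ^ (m + 1) * x) :=
  sum_range_succ _ _

lemma tanSum_sub_le {l x y : ℝ} (m : ℕ) (hl0 : 0 ≤ l) (hl1 : l ≤ 1) (hyx : y ≤ x)
    (hy : y ^ 2 ≤ x ^ 2) (hx : x ^ 2 < 1) :
    tanSum l m x - tanSum l m y ≤ (x - y) / (1 - x ^ 2) * ∑ i ∈ range (m + 1), l ^ i := by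
  rw [tanSum, tanSum, ← sum_sub_distrib, mul_sum]
  refine sum_le_sum fun i _ => ?_
  have hli : (l ^ i) ^ 2 ≤ 1 := pow_le_one₀ (by positivity) (pow_le_one₀ hl0 hl1)
  calc tan (l ^ i * x) - tan (l ^ i * y)
      ≤ (l ^ i * x - l ^ i * y) / (1 - x ^ 2) := by
        refine tan_sub_tan_le (by gcongr) ?_ ?_ hx <;> rw [mul_pow]
        · exact mul_le_of_le_one_left (sq_nonneg x) hli
        · exact (mul_le_of_le_one_left (sq_nonneg y) hli).trans hy
    _ = (x - y) / (1 - x ^ 2) * l ^ i := by ring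

section periodicAngle

variable {l : ℝ} (hl0 : 0 < l) (hl1 : l < 1)
include hl0 hl1

lemma periodicAngle_mul (m : ℕ) :
    periodicAngle l m * (1 - l ^ (m + 2)) = π / 2 * l * (1 - l) :=
  div_mul_cancel₀ _ (sub_pos.2 (pow_lt_one₀ hl0.le hl1 (by omega))).ne'

lemma periodicAngle_pos (m : ℕ) : 0 < periodicAngle l m := by
  have : 0 < 1 - l := sub_pos.2 hl1
  have : 0 < 1 - l ^ (m + 2) := sub_pos.2 (pow_lt_one₀ hl0.le hl1 (by omega))
  unfold periodicAngle
  positivity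

lemma periodicAngle_sub_succ_mul (m : ℕ) :
    (periodicAngle l m - periodicAngle l (m + 1)) * (1 - l ^ (m + 2)) =
      l ^ (m + 2) * (1 - l) * periodicAngle l (m + 1) := by
  linear_combination periodicAngle_mul hl0 hl1 m - periodicAngle_mul hl0 hl1 (m + 1)

lemma periodicAngle_succ_le (m : ℕ) : periodicAngle l (m + 1) ≤ periodicAngle l m := by
  have hD : 0 < 1 - l ^ (m + 2) := sub_pos.2 (pow_lt_one₀ hl0.le hl1 (by omega))
  have := periodicAngle_sub_succ_mul hl0 hl1 m
  have : 0 ≤ l ^ (m + 2) * (1 - l) * periodicAngle l (m + 1) := by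
    have := periodicAngle_pos hl0 hl1 (m + 1)
    have : 0 < 1 - l := sub_pos.2 hl1
    positivity
  nlinarith

lemma periodicAngle_sq_mul_lt {m : ℕ} (hm : 1 ≤ m) :
    periodicAngle l m ^ 2 * (1 - l ^ (m + 2)) < 1 - l := by
  have hsq : periodicAngle l m ^ 2 * (1 - l ^ (m + 2)) =
      (π / 2 * l * (1 - l)) ^ 2 / (1 - l ^ (m + 2)) := by
    rw [← periodicAngle_mul hl0 hl1 m]
    field_simp
  set D := 1 - l ^ (m + 2)
  have hD3 : 1 - l ^ 3 ≤ D := by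
    have : l ^ (m + 2) ≤ l ^ 3 := pow_le_pow_of_le_one hl0.le hl1.le (by omega)
    linarith
  have hD : 0 < D := lt_of_lt_of_le (by nlinarith [pow_lt_one₀ hl0.le hl1 three_ne_zero]) hD3
  have hπ : π ^ 2 < 10 := by nlinarith [pi_lt_d2, pi_pos]
  -- `(π/2)² l² < 1 + l + l²`, then multiply by `(1 - l)² > 0` and use `1 - l³ ≤ D`
  have hC : (π / 2 * l * (1 - l)) ^ 2 < (1 - l) * D := by
    have h1l : 0 < 1 - l := sub_pos.2 hl1
    have hpoly : π ^ 2 / 4 * l ^ 2 < 1 + l + l ^ 2 := by nlinarith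
    have := mul_lt_mul_of_pos_right hpoly (mul_pos h1l h1l)
    nlinarith
  rw [hsq, div_lt_iff₀ hD]
  exact hC

lemma periodicAngle_sub_succ_mul_geom_lt {n : ℕ} (hn : 1 ≤ n) :
    (periodicAngle l n - periodicAngle l (n + 1)) * ∑ i ∈ range (n + 1), l ^ i <
      (1 - periodicAngle l n ^ 2) * (l ^ (n + 1) * periodicAngle l (n + 1)) := by
  have h1l : 0 < 1 - l := sub_pos.2 hl1
  have hD : 0 < 1 - l ^ (n + 2) := sub_pos.2 (pow_lt_one₀ hl0.le hl1 (by omega))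
  have hkey := periodicAngle_sq_mul_lt hl0 hl1 hn
  have hb := periodicAngle_pos hl0 hl1 (n + 1)
  refine lt_of_mul_lt_mul_right (a := (1 - l) * (1 - l ^ (n + 2))) ?_ (by positivity)
  have hdiff : (1 - periodicAngle l n ^ 2) * (l ^ (n + 1) * periodicAngle l (n + 1)) *
        ((1 - l) * (1 - l ^ (n + 2))) -
      (periodicAngle l n - periodicAngle l (n + 1)) * (∑ i ∈ range (n + 1), l ^ i) *
        ((1 - l) * (1 - l ^ (n + 2))) =
      (1 - l) * l ^ (n + 1) * periodicAngle l (n + 1) *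
        (1 - l - periodicAngle l n ^ 2 * (1 - l ^ (n + 2))) := by
    linear_combination (-(1 - l) * ∑ i ∈ range (n + 1), l ^ i) *
        periodicAngle_sub_succ_mul hl0 hl1 n +
      l ^ (n + 2) * (1 - l) * periodicAngle l (n + 1) * geom_sum_mul l (n + 1)
  have : 0 < (1 - l) * l ^ (n + 1) * periodicAngle l (n + 1) *
      (1 - l - periodicAngle l n ^ 2 * (1 - l ^ (n + 2))) := by
    have := sub_pos.2 hkey
    positivity
  linarith

end periodicAngle

end DissipativeSquareBilliard

open DissipativeSquareBilliard

/-- For every `λ ∈ (0,1)` and `n ≥ 1`, `S_{n+1}(θ_{n+1}) > S_n(θ_n)`, where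
`S_n(θ) = Σ_{i≤n} tan(λⁱθ)` and `θ_n = (π/2) λ(1−λ)/(1−λ^{n+2})`. -/
theorem stmt_11 (n : ℕ) (hn : 1 ≤ n) (l : ℝ) (hl0 : 0 < l) (hl1 : l < 1) :
    let θ : ℕ → ℝ := fun m => (π / 2) * l * (1 - l) / (1 - l ^ (m + 2))
    let S : ℕ → ℝ → ℝ := fun m x =>
      ∑ i ∈ Finset.range (m + 1), Real.tan (l ^ i * x)
    S n (θ n) < S (n + 1) (θ (n + 1)) := by
  intro θ S
  show tanSum l n (periodicAngle l n) < tanSum l (n + 1) (periodicAngle l (n + 1))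
  set a := periodicAngle l n
  set b := periodicAngle l (n + 1)
  have hb : 0 < b := periodicAngle_pos hl0 hl1 (n + 1)
  have hba : b ≤ a := periodicAngle_succ_le hl0 hl1 n
  have ha : a ^ 2 < 1 := by
    have hD : 1 - l < 1 - l ^ (n + 2) := by
      linarith [pow_lt_pow_right_of_lt_one₀ hl0 hl1 (show 1 < n + 2 by omega), pow_one l]
    nlinarith [periodicAngle_sq_mul_lt hl0 hl1 hn, sq_nonneg a]
  have hbl : l ^ (n + 1) * b < π / 2 := by
    have hb1 : b < 1 := by nlinarith
    have : l ^ (n + 1) ≤ 1 := pow_le_one₀ hl0.le hl1.le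
    nlinarith [pi_gt_three]
  calc tanSum l n a
      ≤ tanSum l n b + (a - b) / (1 - a ^ 2) * ∑ i ∈ range (n + 1), l ^ i := by
        linarith [tanSum_sub_le n hl0.le hl1.le hba (by nlinarith) ha]
    _ < tanSum l n b + l ^ (n + 1) * b := by
        rw [add_lt_add_iff_left, div_mul_eq_mul_div, div_lt_iff₀ (sub_pos.2 ha),
          mul_comm _ (1 - a ^ 2)]
        exact periodicAngle_sub_succ_mul_geom_lt hl0 hl1 hn
    _ ≤ tanSum l n b + tan (l ^ (n + 1) * b) := by gcongr; exact le_tan (by positivity) hbl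
    _ = tanSum l (n + 1) b := (tanSum_succ l n b).symm
end

section
/- The equation Σ_{i=0}^{∞} tan((π/2)·λ^{i+1}(1 − λ)) = 1 has a unique solution λ₁ in (0,1): the function λ ↦ Σ_{i=0}^{∞} tan((π/2)·λ^{i+1}(1 − λ)) is continuous on (0,1), tends to 0 as λ → 0⁺, and exceeds 1 for λ close to 1. -/
/-!
Write `θᵢ(λ) = (π/2) λ^{i+1} (1 - λ)`. Then `∑ θᵢ(λ) = (π/2) λ`, and every `θᵢ(λ)` lies in
`[0, π/4]`, where `t ≤ tan t ≤ 2t`. So the series is dominated by a geometric series locally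
uniformly on `[0, 1)`, hence continuous there with `G(0) = 0`, and `G(λ) ≥ (π/2) λ > 1` for
`λ > 2/3`; the intermediate value theorem on `[0, 2/3]` gives a root.

Every root lies below `2/π < 2/3`, and `G` is strictly increasing on `[0, 2/3]`. Indeed
`G(λ) = (π/2) λ + ∑ φ(θᵢ(λ))` with `φ(t) = tan t - t`; the terms `i ≥ 1` are nondecreasing since
`φ` is monotone and `λ^{i+2}(1 - λ)` increases on `[0, 2/3]`, and the `i = 0` term cannot undo
the linear growth since `φ` is `1`-Lipschitz on `[-π/4, π/4]` while
`|θ₀(y) - θ₀(x)| = (π/2)(y - x)|1 - x - y| < (π/2)(y - x)`.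
-/

open Real Filter Set Topology

lemma hasDerivAt_tan_sub_id {t : ℝ} (ht : cos t ≠ 0) :
    HasDerivAt (fun s => tan s - s) (tan t ^ 2) t := by
  have h := (hasDerivAt_tan ht).sub (hasDerivAt_id' t)
  rwa [← inv_one_add_tan_sq ht, one_div, inv_inv, add_sub_cancel_left] at h

lemma cos_ne_zero_of_mem_Ioo {t : ℝ} (ht : t ∈ Ioo (-(π / 2)) (π / 2)) : cos t ≠ 0 :=
  (cos_pos_of_mem_Ioo ht).ne'

lemma Icc_neg_pi_div_four_subset_Ioo : Icc (-(π / 4)) (π / 4) ⊆ Ioo (-(π / 2)) (π / 2) :=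
  Icc_subset_Ioo (by linarith [pi_pos]) (by linarith [pi_pos])

lemma monotoneOn_tan_sub_id : MonotoneOn (fun t => tan t - t) (Ioo (-(π / 2)) (π / 2)) := by
  have hderiv {t : ℝ} (ht : t ∈ Ioo (-(π / 2)) (π / 2)) :=
    hasDerivAt_tan_sub_id (cos_ne_zero_of_mem_Ioo ht)
  refine monotoneOn_of_hasDerivWithinAt_nonneg (convex_Ioo _ _)
    (fun t ht => (hderiv ht).continuousAt.continuousWithinAt)
    (fun t ht => ?_) (fun t _ => sq_nonneg (tan t))
  rw [interior_Ioo] at ht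
  exact (hderiv ht).hasDerivWithinAt

lemma abs_tan_le_one {t : ℝ} (ht : t ∈ Icc (-(π / 4)) (π / 4)) : |tan t| ≤ 1 := by
  have hsub := Icc_neg_pi_div_four_subset_Ioo
  have hmono := strictMonoOn_tan.monotoneOn
  have hlo := hmono (hsub ⟨le_rfl, by linarith [pi_pos]⟩) (hsub ht) ht.1
  have hhi := hmono (hsub ht) (hsub ⟨by linarith [pi_pos], le_rfl⟩) ht.2
  rw [tan_neg, tan_pi_div_four] at hlo
  rw [tan_pi_div_four] at hhi
  exact abs_le.2 ⟨hlo, hhi⟩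

lemma lipschitzOnWith_tan_sub_id :
    LipschitzOnWith 1 (fun t => tan t - t) (Icc (-(π / 4)) (π / 4)) := by
  refine (convex_Icc _ _).lipschitzOnWith_of_nnnorm_hasDerivWithin_le (fun t ht =>
    (hasDerivAt_tan_sub_id (cos_ne_zero_of_mem_Ioo (Icc_neg_pi_div_four_subset_Ioo ht))
      ).hasDerivWithinAt) (fun t ht => ?_)
  rw [← NNReal.coe_le_coe, coe_nnnorm, Real.norm_eq_abs, abs_pow, NNReal.coe_one]
  exact pow_le_one₀ (abs_nonneg _) (abs_tan_le_one ht)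

lemma tan_le_two_mul {t : ℝ} (h0 : 0 ≤ t) (h1 : t ≤ π / 4) : tan t ≤ 2 * t := by
  have := lipschitzOnWith_tan_sub_id.dist_le_mul t ⟨by linarith, h1⟩ 0
    ⟨by linarith [pi_pos], by linarith [pi_pos]⟩
  simp only [tan_zero, sub_zero, NNReal.coe_one, one_mul, Real.dist_eq] at this
  linarith [(abs_le.1 this).2, abs_of_nonneg h0]

namespace DissipativeSquareBilliard

noncomputable def angle (l : ℝ) (i : ℕ) : ℝ := π / 2 * l ^ (i + 1) * (1 - l)

noncomputable def tanSeries (l : ℝ) : ℝ := ∑' i : ℕ, tan (angle l i)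

@[fun_prop]
lemma continuous_angle (i : ℕ) : Continuous (fun l => angle l i) := by
  unfold angle
  fun_prop

lemma angle_mem_Icc {l : ℝ} (h0 : 0 ≤ l) (h1 : l ≤ 1) (i : ℕ) : angle l i ∈ Icc 0 (π / 4) := by
  have hpow : l ^ (i + 1) ≤ l := pow_le_of_le_one h0 h1 (Nat.succ_ne_zero i)
  have hquarter : l * (1 - l) ≤ 1 / 4 := by nlinarith [sq_nonneg (l - 1 / 2)]
  have hprod : l ^ (i + 1) * (1 - l) ≤ 1 / 2 := by nlinarith
  unfold angle
  constructor
  · have : 0 ≤ 1 - l := by linarith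
    positivity
  · nlinarith [pi_pos]

lemma angle_mem_Icc_neg {l : ℝ} (h0 : 0 ≤ l) (h1 : l ≤ 1) (i : ℕ) :
    angle l i ∈ Icc (-(π / 4)) (π / 4) :=
  Icc_subset_Icc_left (by linarith [pi_pos]) (angle_mem_Icc h0 h1 i)

lemma angle_mem_Ioo {l : ℝ} (h0 : 0 ≤ l) (h1 : l ≤ 1) (i : ℕ) :
    angle l i ∈ Ioo (-(π / 2)) (π / 2) :=
  Icc_neg_pi_div_four_subset_Ioo (angle_mem_Icc_neg h0 h1 i)

lemma hasSum_angle {l : ℝ} (h0 : 0 ≤ l) (h1 : l < 1) : HasSum (angle l) (π / 2 * l) := by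
  have hgeom := (hasSum_geometric_of_lt_one h0 h1).mul_left (π / 2 * l * (1 - l))
  have hterm : angle l = fun i => π / 2 * l * (1 - l) * l ^ i := by
    funext i
    rw [angle, pow_succ]
    ring
  rwa [mul_inv_cancel_right₀ (by linarith : (1 : ℝ) - l ≠ 0), ← hterm] at hgeom

lemma angle_le_tan {l : ℝ} (h0 : 0 ≤ l) (h1 : l ≤ 1) (i : ℕ) : angle l i ≤ tan (angle l i) :=
  le_tan (angle_mem_Icc h0 h1 i).1 (angle_mem_Ioo h0 h1 i).2

lemma tan_angle_nonneg {l : ℝ} (h0 : 0 ≤ l) (h1 : l ≤ 1) (i : ℕ) : 0 ≤ tan (angle l i) :=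
  (angle_mem_Icc h0 h1 i).1.trans (angle_le_tan h0 h1 i)

lemma tan_angle_le {l : ℝ} (h0 : 0 ≤ l) (h1 : l ≤ 1) (i : ℕ) :
    tan (angle l i) ≤ 2 * angle l i :=
  tan_le_two_mul (angle_mem_Icc h0 h1 i).1 (angle_mem_Icc h0 h1 i).2

lemma summable_tan_angle {l : ℝ} (h0 : 0 ≤ l) (h1 : l < 1) :
    Summable (fun i => tan (angle l i)) :=
  Summable.of_nonneg_of_le (tan_angle_nonneg h0 h1.le) (tan_angle_le h0 h1.le)
    ((hasSum_angle h0 h1).summable.mul_left 2)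

lemma pi_div_two_mul_le_tanSeries {l : ℝ} (h0 : 0 ≤ l) (h1 : l < 1) :
    π / 2 * l ≤ tanSeries l :=
  hasSum_le (angle_le_tan h0 h1.le) (hasSum_angle h0 h1) (summable_tan_angle h0 h1).hasSum

lemma tanSeries_zero : tanSeries 0 = 0 := by
  simp [tanSeries, angle]

lemma continuousOn_tanSeries_Icc {b : ℝ} (hb0 : 0 ≤ b) (hb : b < 1) :
    ContinuousOn tanSeries (Icc 0 b) := by
  refine continuousOn_tsum (u := fun i => π * b ^ (i + 1)) (fun i => ?_) ?_ (fun i l hl => ?_)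
  · exact continuousOn_tan.comp (continuous_angle i).continuousOn
      (fun l hl => cos_ne_zero_of_mem_Ioo (angle_mem_Ioo hl.1 (hl.2.trans hb.le) i))
  · simpa [pow_succ, mul_assoc] using
      ((summable_geometric_of_lt_one hb0 hb).mul_right b).mul_left π
  · have h1 : l ≤ 1 := hl.2.trans hb.le
    have hpow : l ^ (i + 1) ≤ b ^ (i + 1) := pow_le_pow_left₀ hl.1 hl.2 _
    have hnonneg : 0 ≤ l ^ (i + 1) := pow_nonneg hl.1 _
    rw [Real.norm_eq_abs, abs_of_nonneg (tan_angle_nonneg hl.1 h1 i)]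
    calc tan (angle l i) ≤ 2 * angle l i := tan_angle_le hl.1 h1 i
      _ = π * (l ^ (i + 1) * (1 - l)) := by unfold angle; ring
      _ ≤ π * b ^ (i + 1) := by gcongr; nlinarith [hl.1]

lemma continuousOn_tanSeries : ContinuousOn tanSeries (Ico 0 1) := by
  rintro l ⟨hl0, hl1⟩
  have hb0 : 0 ≤ (l + 1) / 2 := by linarith
  have hb1 : (l + 1) / 2 < 1 := by linarith
  refine ((continuousOn_tanSeries_Icc hb0 hb1) l ⟨hl0, by linarith⟩).mono_of_mem_nhdsWithin ?_
  exact mem_nhdsWithin.2 ⟨Iio ((l + 1) / 2), isOpen_Iio, by simp only [mem_Iio]; linarith,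
    fun x hx => ⟨hx.2.1, hx.1.le⟩⟩

lemma tendsto_tanSeries_nhdsGT_zero : Tendsto tanSeries (𝓝[>] 0) (𝓝 0) := by
  have hat0 := (continuousOn_tanSeries 0 ⟨le_rfl, one_pos⟩).tendsto
  rw [tanSeries_zero] at hat0
  exact hat0.mono_left
    (nhdsWithin_le_of_mem (mem_of_superset (Ioo_mem_nhdsGT one_pos) Ioo_subset_Ico_self))

lemma one_lt_tanSeries {l : ℝ} (h0 : 2 / 3 ≤ l) (h1 : l < 1) : 1 < tanSeries l := by
  have := pi_div_two_mul_le_tanSeries (by linarith) h1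
  nlinarith [pi_gt_three]

lemma sq_mul_one_sub_le {x y : ℝ} (hx : 0 ≤ x) (hxy : x ≤ y) (hy : y ≤ 2 / 3) :
    x ^ 2 * (1 - x) ≤ y ^ 2 * (1 - y) := by
  nlinarith [mul_nonneg hx (sub_nonneg.2 hxy), mul_nonneg (sub_nonneg.2 hxy) (sub_nonneg.2 hy)]

lemma angle_succ_le {x y : ℝ} (hx : 0 ≤ x) (hxy : x ≤ y) (hy : y ≤ 2 / 3) (i : ℕ) :
    angle x (i + 1) ≤ angle y (i + 1) := by
  have hsplit (l : ℝ) : angle l (i + 1) = π / 2 * l ^ i * (l ^ 2 * (1 - l)) := by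
    unfold angle
    ring
  rw [hsplit x, hsplit y]
  exact mul_le_mul (by gcongr) (sq_mul_one_sub_le hx hxy hy)
    (mul_nonneg (sq_nonneg x) (by linarith)) (by have := hx.trans hxy; positivity)

lemma abs_angle_zero_sub_lt {x y : ℝ} (hx : 0 ≤ x) (hxy : x < y) (hy : y < 1) :
    |angle y 0 - angle x 0| < π / 2 * (y - x) := by
  have hdiff : angle y 0 - angle x 0 = π / 2 * (y - x) * (1 - x - y) := by
    unfold angle
    ring
  have hpos : 0 < π / 2 * (y - x) := mul_pos (by linarith [pi_pos]) (by linarith)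
  rw [hdiff, abs_mul, abs_of_pos hpos]
  exact mul_lt_of_lt_one_right hpos (abs_lt.2 ⟨by linarith, by linarith⟩)

lemma tanSeries_eq {l : ℝ} (h0 : 0 ≤ l) (h1 : l < 1) :
    tanSeries l = π / 2 * l + (tan (angle l 0) - angle l 0) +
      ∑' i, (tan (angle l (i + 1)) - angle l (i + 1)) := by
  have hsum := (summable_tan_angle h0 h1).hasSum.sub (hasSum_angle h0 h1)
  have hsplit := hsum.summable.tsum_eq_zero_add
  rw [hsum.tsum_eq] at hsplit
  unfold tanSeries
  linarith

lemma tanSeries_strictMonoOn : StrictMonoOn tanSeries (Icc 0 (2 / 3)) := by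
  rintro x ⟨hx0, hx⟩ y ⟨hy0, hy⟩ hxy
  have hx1 : x < 1 := by linarith
  have hy1 : y < 1 := by linarith
  have hsummable {l : ℝ} (h0 : 0 ≤ l) (h1 : l < 1) :
      Summable (fun i => tan (angle l (i + 1)) - angle l (i + 1)) :=
    (summable_nat_add_iff 1).2 ((summable_tan_angle h0 h1).sub (hasSum_angle h0 h1).summable)
  have htail : ∑' i, (tan (angle x (i + 1)) - angle x (i + 1)) ≤
      ∑' i, (tan (angle y (i + 1)) - angle y (i + 1)) :=
    Summable.tsum_le_tsum (fun i => monotoneOn_tan_sub_id (angle_mem_Ioo hx0 hx1.le _)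
      (angle_mem_Ioo hy0 hy1.le _) (angle_succ_le hx0 hxy.le hy i)) (hsummable hx0 hx1)
      (hsummable hy0 hy1)
  have hhead := lipschitzOnWith_tan_sub_id.dist_le_mul _ (angle_mem_Icc_neg hx0 hx1.le 0) _
    (angle_mem_Icc_neg hy0 hy1.le 0)
  rw [NNReal.coe_one, one_mul, Real.dist_eq, Real.dist_eq, abs_sub_comm (angle x 0)] at hhead
  have hangle := abs_angle_zero_sub_lt hx0 hxy hy1
  rw [tanSeries_eq hx0 hx1, tanSeries_eq hy0 hy1]
  linarith [le_abs_self ((tan (angle x 0) - angle x 0) - (tan (angle y 0) - angle y 0))]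

end DissipativeSquareBilliard

open DissipativeSquareBilliard in
/-- The function `G(λ) = Σ_{i=0}^∞ tan((π/2) λ^{i+1} (1−λ))` is continuous on
`(0,1)`, tends to `0` as `λ → 0⁺`, exceeds `1` for `λ` close to `1`, and the
equation `G(λ) = 1` has a unique solution `λ₁ ∈ (0,1)`. -/
theorem stmt_13 :
    let G : ℝ → ℝ := fun l => ∑' i : ℕ, Real.tan ((π / 2) * l ^ (i + 1) * (1 - l))
    ContinuousOn G (Set.Ioo 0 1) ∧
    Tendsto G (nhdsWithin 0 (Set.Ioi 0)) (nhds 0) ∧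
    (∃ a ∈ Set.Ioo (0 : ℝ) 1, ∀ l ∈ Set.Ioo a 1, 1 < G l) ∧
    ∃! l₁ : ℝ, l₁ ∈ Set.Ioo (0 : ℝ) 1 ∧ G l₁ = 1 := by
  intro G
  rw [show G = tanSeries from rfl]
  have hcont := continuousOn_tanSeries
  have hroot_le {l : ℝ} (hl : l ∈ Ioo 0 1) (hGl : tanSeries l = 1) : l ∈ Icc 0 (2 / 3) :=
    ⟨hl.1.le, not_lt.1 fun h => (one_lt_tanSeries h.le hl.2).ne' hGl⟩
  obtain ⟨l₁, hl₁, hGl₁⟩ : ∃ l ∈ Icc (0 : ℝ) (2 / 3), tanSeries l = 1 :=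
    intermediate_value_Icc (by norm_num) (hcont.mono (Icc_subset_Ico_right (by norm_num)))
      ⟨by rw [tanSeries_zero]; norm_num, (one_lt_tanSeries le_rfl (by norm_num)).le⟩
  have hl₁pos : 0 < l₁ := hl₁.1.lt_of_ne (by rintro rfl; simp [tanSeries_zero] at hGl₁)
  refine ⟨hcont.mono Ioo_subset_Ico_self, tendsto_tanSeries_nhdsGT_zero,
    ⟨2 / 3, by norm_num, fun l hl => one_lt_tanSeries hl.1.le hl.2⟩,
    ⟨l₁, ⟨⟨hl₁pos, by linarith [hl₁.2]⟩, hGl₁⟩, fun l hl => ?_⟩⟩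
  exact tanSeries_strictMonoOn.injOn (hroot_le hl.1 hl.2) hl₁ (hl.2.trans hGl₁.symm)
end

section
/- For n ≥ 1 and λ ∈ (0,1), with θ_n = (π/2)·λ(1 − λ)/(1 − λ^{n+2}), the quantity γ₂(λⁿθ_n) = cot(λⁿθ_n)·cot(λ(π/2 − λⁿθ_n)) is strictly greater than 1. -/
open Real

/-! Both arguments `a = λⁿθ_n` and `b = λ(π/2 − a)` lie in `(0, π/2)` with `a + b < π/2`, because
`θ_n < π/2`. Then `tan b < tan (π/2 − a) = cot a`, so `tan a · tan b < 1`, i.e. `cot a · cot b > 1`. -/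

lemma Real.cot_eq_inv_tan (x : ℝ) : cot x = (tan x)⁻¹ := by
  rw [cot_eq_cos_div_sin, tan_eq_sin_div_cos, inv_div]

lemma Real.tan_mul_tan_lt_one {a b : ℝ} (ha : 0 < a) (hb : 0 < b) (hab : a + b < π / 2) :
    tan a * tan b < 1 := by
  have hta : 0 < tan a := tan_pos_of_pos_of_lt_pi_div_two ha (by linarith)
  have htb : tan b < (tan a)⁻¹ := by
    rw [← tan_pi_div_two_sub]
    exact tan_lt_tan_of_lt_of_lt_pi_div_two (by linarith) (by linarith) (by linarith)
  calc tan a * tan b < tan a * (tan a)⁻¹ := mul_lt_mul_of_pos_left htb hta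
    _ = 1 := mul_inv_cancel₀ hta.ne'

lemma Real.one_lt_cot_mul_cot {a b : ℝ} (ha : 0 < a) (hb : 0 < b) (hab : a + b < π / 2) :
    1 < cot a * cot b := by
  have htab : 0 < tan a * tan b := mul_pos (tan_pos_of_pos_of_lt_pi_div_two ha (by linarith))
    (tan_pos_of_pos_of_lt_pi_div_two hb (by linarith))
  rw [cot_eq_inv_tan, cot_eq_inv_tan, ← mul_inv, one_lt_inv₀ htab]
  exact tan_mul_tan_lt_one ha hb hab

lemma Real.one_lt_cot_mul_cot_mul_pi_div_two_sub {l a : ℝ} (hl0 : 0 < l) (hl1 : l < 1)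
    (ha0 : 0 < a) (ha : a < π / 2) : 1 < cot a * cot (l * (π / 2 - a)) :=
  one_lt_cot_mul_cot ha0 (mul_pos hl0 (by linarith))
    (by nlinarith [mul_pos (sub_pos.2 hl1) (sub_pos.2 ha)])

lemma mul_one_sub_lt_one_sub_pow_add_two {l : ℝ} (hl0 : 0 < l) (hl1 : l < 1) (n : ℕ) :
    l * (1 - l) < 1 - l ^ (n + 2) := by
  have : l ^ (n + 2) ≤ l ^ 2 := pow_le_pow_of_le_one hl0.le hl1.le (by omega)
  nlinarith

theorem stmt_15_general (n : ℕ) (l : ℝ) (hl0 : 0 < l) (hl1 : l < 1) :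
    let θ : ℝ := (π / 2) * l * (1 - l) / (1 - l ^ (n + 2))
    1 < Real.cot (l ^ n * θ) * Real.cot (l * (π / 2 - l ^ n * θ)) := by
  intro θ
  have hden := mul_one_sub_lt_one_sub_pow_add_two hl0 hl1 n
  have hden0 : 0 < 1 - l ^ (n + 2) := by nlinarith
  have hθ0 : 0 < θ := div_pos (mul_pos (by positivity) (sub_pos.2 hl1)) hden0
  have hθ : θ < π / 2 := by
    rw [div_lt_iff₀ hden0, mul_assoc]
    exact mul_lt_mul_of_pos_left hden (by positivity)
  have hpow : l ^ n ≤ 1 := pow_le_one₀ hl0.le hl1.le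
  exact one_lt_cot_mul_cot_mul_pi_div_two_sub hl0 hl1 (by positivity) (by nlinarith)

/-- For `n ≥ 1`, `λ ∈ (0,1)` and `θ_n = (π/2) λ(1−λ)/(1−λ^{n+2})`, one has
`γ₂(λⁿθ_n) = cot(λⁿθ_n) · cot(λ(π/2 − λⁿθ_n)) > 1`. -/
theorem stmt_15 (n : ℕ) (hn : 1 ≤ n) (l : ℝ) (hl0 : 0 < l) (hl1 : l < 1) :
    let θ : ℝ := (π / 2) * l * (1 - l) / (1 - l ^ (n + 2))
    1 < Real.cot (l ^ n * θ) * Real.cot (l * (π / 2 - l ^ n * θ)) :=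
  stmt_15_general n l hl0 hl1
end

section
/- Let λ ∈ (0,1), θ_λ = πλ/(2(1+λ)), s_λ = 1/(1 + tan θ_λ), and f₂(s, θ) = ((1 − s) cot θ, λ(π/2 − θ)). Then the Jacobian matrix of f₂ at (s_λ, θ_λ) is lower/upper triangular with eigenvalues −cot θ_λ (of modulus > 1 since θ_λ < π/4) and −λ (of modulus < 1); hence the fixed point p_λ is hyperbolic of saddle type. -/
/-!
The second component of `f₂` depends on `θ` alone, so `D f₂` is upper triangular and its
eigenvalues are the diagonal entries `−cot θ` and `−λ`. Since `λ < 1` means `θ_λ < π/4`,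
i.e. `tan θ_λ < 1`, the first has modulus `> 1`, while `|−λ| < 1`.
-/

open Real

theorem Real.hasDerivAt_cot {x : ℝ} (hx : sin x ≠ 0) : HasDerivAt cot (-1 / sin x ^ 2) x := by
  rw [show cot = fun y => cos y / sin y from funext cot_eq_cos_div_sin]
  refine ((hasDerivAt_cos x).div (hasDerivAt_sin x) hx).congr_deriv ?_
  rw [← sin_sq_add_cos_sq x]
  ring

theorem Real.one_lt_cot_of_pos_of_lt_pi_div_four {x : ℝ} (h0 : 0 < x) (h : x < π / 4) :
    1 < cot x := by
  have htan_pos : 0 < tan x := tan_pos_of_pos_of_lt_pi_div_two h0 (by linarith [pi_pos])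
  have htan_lt : tan x < 1 := by
    simpa using tan_lt_tan_of_nonneg_of_lt_pi_div_two h0.le (by linarith [pi_pos]) h
  rw [← tan_inv_eq_cot]
  exact one_lt_inv₀ htan_pos |>.mpr htan_lt

section UpperTriangular

variable {𝕜 : Type*} [NontriviallyNormedField 𝕜]

/-- The linear map with matrix `[[a, b], [0, d]]`. -/
def upperTriangularCLM (a b d : 𝕜) : 𝕜 × 𝕜 →L[𝕜] 𝕜 × 𝕜 :=
  (a • ContinuousLinearMap.fst 𝕜 𝕜 𝕜 + b • ContinuousLinearMap.snd 𝕜 𝕜 𝕜).prod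
    (d • ContinuousLinearMap.snd 𝕜 𝕜 𝕜)

@[simp]
theorem upperTriangularCLM_apply (a b d u v : 𝕜) :
    upperTriangularCLM a b d (u, v) = (a * u + b * v, d * v) := by
  simp [upperTriangularCLM]

theorem exists_eigenvector_upperTriangularCLM {a d : 𝕜} (b : 𝕜) (had : a ≠ d) :
    ∃ v : 𝕜 × 𝕜, v ≠ 0 ∧ upperTriangularCLM a b d v = d • v := by
  have hda : d - a ≠ 0 := sub_ne_zero.mpr had.symm
  refine ⟨(b / (d - a), 1), by simp [Prod.ext_iff], ?_⟩
  simp only [upperTriangularCLM_apply, Prod.smul_mk, smul_eq_mul, mul_one, Prod.mk.injEq, and_true]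
  field_simp
  ring

end UpperTriangular

/-- The adjacent-side branch `f₂` of the reduced dissipative square billiard map. -/
noncomputable def adjacentSideMap (l : ℝ) (p : ℝ × ℝ) : ℝ × ℝ :=
  ((1 - p.1) * cot p.2, l * (π / 2 - p.2))

theorem hasFDerivAt_adjacentSideMap (l : ℝ) {s θ : ℝ} (hθ : sin θ ≠ 0) :
    HasFDerivAt (adjacentSideMap l)
      (upperTriangularCLM (-cot θ) (-(1 - s) / sin θ ^ 2) (-l)) (s, θ) := by
  have hone_sub : HasFDerivAt (fun p : ℝ × ℝ => 1 - p.1)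
      (0 - ContinuousLinearMap.fst ℝ ℝ ℝ) (s, θ) :=
    (hasFDerivAt_const 1 _).sub hasFDerivAt_fst
  have hcot : HasFDerivAt (cot ∘ Prod.snd)
      ((-1 / sin θ ^ 2) • ContinuousLinearMap.snd ℝ ℝ ℝ) (s, θ) :=
    (hasDerivAt_cot hθ).comp_hasFDerivAt (s, θ) hasFDerivAt_snd
  have hfst := hone_sub.mul hcot
  have hsnd : HasFDerivAt (fun p : ℝ × ℝ => l * (π / 2 - p.2))
      (l • (0 - ContinuousLinearMap.snd ℝ ℝ ℝ)) (s, θ) :=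
    ((hasFDerivAt_const (π / 2) _).sub hasFDerivAt_snd).const_mul l
  refine (hfst.prodMk hsnd).congr_fderiv (ContinuousLinearMap.ext fun ⟨u, v⟩ => ?_)
  simp only [ContinuousLinearMap.prod_apply, add_apply, smul_apply, sub_apply, zero_apply,
    ContinuousLinearMap.coe_fst', ContinuousLinearMap.coe_snd', Function.comp_apply, smul_eq_mul,
    upperTriangularCLM_apply, Prod.mk.injEq]
  constructor <;> ring

/-- The angle `θ_λ` of the fixed point `p_λ` of `f₂`. -/
noncomputable def saddleAngle (l : ℝ) : ℝ :=
  π * l / (2 * (1 + l))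

theorem saddleAngle_mem_Ioo {l : ℝ} (hl0 : 0 < l) (hl1 : l < 1) :
    saddleAngle l ∈ Set.Ioo 0 (π / 4) := by
  have hpi := pi_pos
  refine ⟨by unfold saddleAngle; positivity, ?_⟩
  rw [saddleAngle, div_lt_div_iff₀ (by linarith) (by norm_num)]
  nlinarith

/-- For `λ ∈ (0,1)`, `θ_λ = πλ/(2(1+λ))`, `s_λ = 1/(1 + tan θ_λ)`, the Jacobian of
`f₂(s, θ) = ((1 − s) cot θ, λ(π/2 − θ))` at `(s_λ, θ_λ)` is the triangular matrix
`[[−cot θ_λ, −(1 − s_λ)/sin² θ_λ], [0, −λ]]`, whose eigenvalues are `−cot θ_λ`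
(of modulus `> 1`, since `θ_λ < π/4`) and `−λ` (of modulus `< 1`); in particular
the fixed point `p_λ` is a hyperbolic saddle. -/
theorem stmt_18 (l : ℝ) (hl0 : 0 < l) (hl1 : l < 1) :
    let θl : ℝ := π * l / (2 * (1 + l))
    let sl : ℝ := 1 / (1 + Real.tan θl)
    let f₂ : ℝ × ℝ → ℝ × ℝ := fun p => ((1 - p.1) * Real.cot p.2, l * (π / 2 - p.2))
    ∃ L : ℝ × ℝ →L[ℝ] ℝ × ℝ,
      (∀ u v : ℝ, L (u, v) =
        (-Real.cot θl * u + (-(1 - sl) / Real.sin θl ^ 2) * v, -l * v)) ∧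
      HasFDerivAt f₂ L (sl, θl) ∧
      L (1, 0) = (-Real.cot θl) • ((1 : ℝ), (0 : ℝ)) ∧
      (∃ v : ℝ × ℝ, v ≠ 0 ∧ L v = (-l) • v) ∧
      θl < π / 4 ∧ 1 < |(-Real.cot θl)| ∧ |(-l)| < 1 := by
  intro θl sl f₂
  obtain ⟨hθ0, hθ4⟩ : θl ∈ Set.Ioo 0 (π / 4) := saddleAngle_mem_Ioo hl0 hl1
  have hcot : 1 < cot θl := one_lt_cot_of_pos_of_lt_pi_div_four hθ0 hθ4
  have hsin : sin θl ≠ 0 := (sin_pos_of_pos_of_lt_pi hθ0 (by linarith [pi_pos])).ne'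
  refine ⟨upperTriangularCLM (-cot θl) (-(1 - sl) / sin θl ^ 2) (-l),
    upperTriangularCLM_apply _ _ _, hasFDerivAt_adjacentSideMap l hsin, by simp,
    exists_eigenvector_upperTriangularCLM _ (by linarith), hθ4, ?_, ?_⟩
  · rwa [abs_neg, abs_of_pos (by linarith)]
  · rwa [abs_neg, abs_of_pos hl0]
end
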